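/- Let τ_P, τ_Q > 0, let n be a positive integer, let (μ_i)_{i=1}^n be a real sequence (the common conditional means of the two models), and let x_1, …, x_n ∈ ℝ. Set b = 2·(1/τ_P² + 1/τ_Q²) and a = 2·(1/τ_P² − 1/τ_Q²) − (1/τ_P² + 1/τ_Q²)·log(τ_Q²/τ_P²). Then the cumulative prequential delta Hyvärinen score is an affine function of the cumulative prequential delta log-score: Σ_{i=1}^n [S_H(x_i; μ_i, τ_Q) − S_H(x_i; μ_i, τ_P)] = b · Σ_{i=1}^n [S_L(x_i; μ_i, τ_Q) − S_L(x_i; μ_i, τ_P)] + n·a. -/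

import Mathlib

/-!
The two predictive distributions share their mean, so for each observation both score
differences are affine in the same squared residual `(x - μ)²`: with `p = 1/τP²`, `q = 1/τQ²`,
the log-score difference has slope `(p - q)/2` and the Hyvärinen difference slope
`p² - q² = (p + q)(p - q)`. Eliminating the residual gives a per-step affine relation with
slope `2(p + q)`, which sums to the cumulative one.
-/

/-- Log-score of an observation x under N(μ, σ²). -/
noncomputable def logScore (x μ σ : ℝ) : ℝ :=
  (1 / 2) * Real.log (2 * Real.pi * σ ^ 2) + (x - μ) ^ 2 / (2 * σ ^ 2)

/-- Hyvärinen score of an observation x under N(μ, σ²). -/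
noncomputable def hyvScore (x μ σ : ℝ) : ℝ :=
  -2 / σ ^ 2 + (x - μ) ^ 2 / σ ^ 4

theorem logScore_sub_logScore {σ σ' : ℝ} (hσ : σ ≠ 0) (hσ' : σ' ≠ 0) (x μ : ℝ) :
    logScore x μ σ' - logScore x μ σ =
      (1 / 2) * Real.log (σ' ^ 2 / σ ^ 2) - (x - μ) ^ 2 / 2 * (1 / σ ^ 2 - 1 / σ' ^ 2) := by
  have h2π : 2 * Real.pi ≠ 0 := by positivity
  rw [logScore, logScore, Real.log_mul h2π (pow_ne_zero 2 hσ'),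
    Real.log_mul h2π (pow_ne_zero 2 hσ), Real.log_div (pow_ne_zero 2 hσ') (pow_ne_zero 2 hσ)]
  ring

theorem hyvScore_sub_hyvScore (σ σ' x μ : ℝ) :
    hyvScore x μ σ' - hyvScore x μ σ =
      2 * (1 / σ ^ 2 - 1 / σ' ^ 2) -
        (x - μ) ^ 2 * (1 / σ ^ 2 + 1 / σ' ^ 2) * (1 / σ ^ 2 - 1 / σ' ^ 2) := by
  rw [hyvScore, hyvScore]
  ring

theorem hyvScore_sub_eq_affine_logScore_sub {σ σ' : ℝ} (hσ : σ ≠ 0) (hσ' : σ' ≠ 0)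
    (x μ : ℝ) :
    hyvScore x μ σ' - hyvScore x μ σ =
      2 * (1 / σ ^ 2 + 1 / σ' ^ 2) * (logScore x μ σ' - logScore x μ σ) +
        (2 * (1 / σ ^ 2 - 1 / σ' ^ 2) -
          (1 / σ ^ 2 + 1 / σ' ^ 2) * Real.log (σ' ^ 2 / σ ^ 2)) := by
  rw [hyvScore_sub_hyvScore, logScore_sub_logScore hσ hσ']
  ring

theorem cumulative_delta_hyv_affine_delta_log_equal_mean_general
    (τP τQ : ℝ) (hP : 0 < τP) (hQ : 0 < τQ) (n : ℕ) (μ x : ℕ → ℝ) :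
    ∑ i ∈ Finset.Icc 1 n, (hyvScore (x i) (μ i) τQ - hyvScore (x i) (μ i) τP) =
      (2 * (1 / τP ^ 2 + 1 / τQ ^ 2)) *
        ∑ i ∈ Finset.Icc 1 n, (logScore (x i) (μ i) τQ - logScore (x i) (μ i) τP) +
      n * (2 * (1 / τP ^ 2 - 1 / τQ ^ 2)
          - (1 / τP ^ 2 + 1 / τQ ^ 2) * Real.log (τQ ^ 2 / τP ^ 2)) := by
  simp_rw [hyvScore_sub_eq_affine_logScore_sub hP.ne' hQ.ne', Finset.sum_add_distrib,
    ← Finset.mul_sum, Finset.sum_const, Nat.card_Icc, add_tsub_cancel_right, nsmul_eq_mul]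

theorem cumulative_delta_hyv_affine_delta_log_equal_mean
    (τP τQ : ℝ) (hP : 0 < τP) (hQ : 0 < τQ) (n : ℕ) (hn : 0 < n) (μ x : ℕ → ℝ) :
    ∑ i ∈ Finset.Icc 1 n, (hyvScore (x i) (μ i) τQ - hyvScore (x i) (μ i) τP) =
      (2 * (1 / τP ^ 2 + 1 / τQ ^ 2)) *
        ∑ i ∈ Finset.Icc 1 n, (logScore (x i) (μ i) τQ - logScore (x i) (μ i) τP) +
      n * (2 * (1 / τP ^ 2 - 1 / τQ ^ 2)
          - (1 / τP ^ 2 + 1 / τQ ^ 2) * Real.log (τQ ^ 2 / τP ^ 2)) :=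
  cumulative_delta_hyv_affine_delta_log_equal_mean_general τP τQ hP hQ n μ x
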